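/- Let k₀ ∈ ℕ be odd, ω = k₀/2 and A > 0. Then there exists κ₀ ∈ ℕ such that for every odd integer κ ≥ κ₀ and every α ∈ [0, A] there is a constant C > 0 with |(m + a(l))² − ω²k² + α| ≥ C·|k| and |(m + a(l))² − ω²k² + α| ≥ (C/|k|)·(m + a(l))² for all l ∈ (−1/2, 1/2], all m ∈ ℤ and all k ∈ κℤ_odd. -/
import Mathlib


/-- The Floquet exponent function of the necklace graph. -/
noncomputable def blochA (l : ℝ) : ℝ :=
  (1 / (2 * Real.pi)) * Real.arccos ((1 / 9) * (8 * Real.cos (2 * Real.pi * l) + 1))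

/-- The set `κ·ℤ_odd = {κ·j : j odd}`. -/
def kappaOdd (κ : ℤ) : Set ℤ := {k | ∃ j : ℤ, Odd j ∧ k = κ * j}

/-- auxiliary -/
noncomputable def bdelta : ℝ := 1 / 2 - Real.arccos (-(7/9)) / (2 * Real.pi)

lemma bdelta_pos : 0 < bdelta := by
  have hπ := Real.pi_pos
  have h1 : Real.arccos (-(7/9)) < Real.pi := by
    rcases lt_or_eq_of_le (Real.arccos_le_pi (-(7/9))) with h | h
    · exact h
    · exfalso; have := Real.arccos_eq_pi.mp h; norm_num at this
  unfold bdelta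
  have : Real.arccos (-(7/9)) / (2 * Real.pi) < 1 / 2 := by
    rw [div_lt_iff₀ (by positivity)]; linarith
  linarith

lemma bdelta_le : bdelta ≤ 1 / 2 := by
  have hπ := Real.pi_pos
  have := Real.arccos_nonneg (-(7/9))
  unfold bdelta
  have : 0 ≤ Real.arccos (-(7/9)) / (2 * Real.pi) := by positivity
  linarith


lemma blochA_nonneg (l : ℝ) : 0 ≤ blochA l := by
  have hπ := Real.pi_pos
  exact mul_nonneg (by positivity) (Real.arccos_nonneg _)

lemma blochA_le (l : ℝ) : blochA l ≤ 1 / 2 - bdelta := by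
  have hπ := Real.pi_pos
  set t : ℝ := (1 / 9) * (8 * Real.cos (2 * Real.pi * l) + 1) with ht
  have hcos := Real.neg_one_le_cos (2 * Real.pi * l)
  have h1 : -(7/9) ≤ t := by rw [ht]; nlinarith
  have h2 : Real.arccos t ≤ Real.arccos (-(7/9)) := by
    unfold Real.arccos
    have := Real.monotone_arcsin h1
    linarith
  have h3 : bdelta = 1 / 2 - Real.arccos (-(7/9)) / (2 * Real.pi) := rfl
  have h4 : blochA l = Real.arccos t / (2 * Real.pi) := by rw [blochA]; ring
  rw [h4, h3]
  have : Real.arccos t / (2 * Real.pi) ≤ Real.arccos (-(7/9)) / (2 * Real.pi) := by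
    gcongr
  linarith

/-- distance of `q + (a - 1/2)` to zero is at least `δ`. -/
lemma dist_half {δ a : ℝ} (hδ : 0 < δ) (hδ' : δ ≤ 1 / 2) (ha : 0 ≤ a)
    (ha' : a ≤ 1 / 2 - δ) (q : ℤ) : δ ≤ |(q : ℝ) + (a - 1 / 2)| := by
  rcases le_or_gt (q : ℝ) 0 with h | h
  · have : (q : ℝ) + (a - 1 / 2) ≤ -δ := by linarith
    calc δ ≤ -((q : ℝ) + (a - 1 / 2)) := by linarith
    _ ≤ |(q : ℝ) + (a - 1 / 2)| := neg_le_abs _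
  · have hq : 0 < q := by exact_mod_cast h
    have hq1 : (1 : ℝ) ≤ (q : ℝ) := by exact_mod_cast hq
    have : δ ≤ (q : ℝ) + (a - 1 / 2) := by linarith
    exact this.trans (le_abs_self _)


set_option maxHeartbeats 1000000 in
/-- (Lower bounds for the embedding `𝓗 ↪ H` in Lemma A.2, in
Bloch variables.) For `ω = k₀/2` with `k₀` odd and `A > 0` there is `κ₀` such that
for all odd `κ ≥ κ₀` and all `α ∈ [0, A]` there is `C > 0` with
`|(m + a(l))² - ω²k² + α| ≥ C |k|` and
`|(m + a(l))² - ω²k² + α| ≥ (C/|k|) (m + a(l))²` for all `l ∈ (-1/2, 1/2]`,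
`m ∈ ℤ` and `k ∈ κℤ_odd`. -/
theorem embedding_spectral_lower_bounds (k₀ : ℕ) (hk₀ : Odd k₀) (A : ℝ) (hA : 0 < A) :
    ∃ κ₀ : ℕ, ∀ κ : ℤ, Odd κ → (κ₀ : ℤ) ≤ κ → ∀ α ∈ Set.Icc (0 : ℝ) A,
      ∃ C > (0 : ℝ), ∀ l ∈ Set.Ioc (-(1 / 2) : ℝ) (1 / 2), ∀ m : ℤ, ∀ k ∈ kappaOdd κ,
        |((m : ℝ) + blochA l) ^ 2 - ((k₀ : ℝ) / 2) ^ 2 * ((k : ℤ) : ℝ) ^ 2 + α| ≥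
            C * |((k : ℤ) : ℝ)| ∧
        |((m : ℝ) + blochA l) ^ 2 - ((k₀ : ℝ) / 2) ^ 2 * ((k : ℤ) : ℝ) ^ 2 + α| ≥
            (C / |((k : ℤ) : ℝ)|) * ((m : ℝ) + blochA l) ^ 2 := by
  have hδ := bdelta_pos
  have hδ' := bdelta_le
  have hk₀1 : 1 ≤ k₀ := hk₀.pos
  have hk₀1R : (1 : ℝ) ≤ (k₀ : ℝ) := by exact_mod_cast hk₀1
  refine ⟨⌈4 * A / bdelta⌉₊ + 1, fun κ hκodd hκge α hα => ?_⟩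
  have hκ₀R : 4 * A / bdelta ≤ ((⌈4 * A / bdelta⌉₊ + 1 : ℕ) : ℝ) := by
    push_cast
    have := Nat.le_ceil (4 * A / bdelta)
    linarith
  set C : ℝ := bdelta / (4 * (k₀ : ℝ)) with hC
  have hCpos : 0 < C := by positivity
  refine ⟨C, hCpos, fun l _ m k hk => ?_⟩
  obtain ⟨j, hjodd, rfl⟩ := hk
  set a : ℝ := blochA l with haa
  set x : ℝ := (m : ℝ) + a with hx
  have ha0 : 0 ≤ a := blochA_nonneg l
  have ha1 : a ≤ 1 / 2 - bdelta := blochA_le l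
  -- the half-integer h
  have hkodd : Odd ((k₀ : ℤ) * |κ * j|) := by
    have h1 : Odd (κ * j) := hκodd.mul hjodd
    have h2 : Odd |κ * j| := by
      rcases abs_choice (κ * j) with h | h <;> rw [h]
      · exact h1
      · exact h1.neg
    exact (Int.odd_coe_nat k₀ |>.mpr hk₀).mul h2
  obtain ⟨n, hn⟩ := hkodd
  set K : ℝ := |((κ * j : ℤ) : ℝ)| with hK
  have hKabs : K = ((|κ * j| : ℤ) : ℝ) := by rw [hK, Int.cast_abs]
  set h : ℝ := (k₀ : ℝ) * K / 2 with hh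
  clear_value C a x K h
  have hhn : h = (n : ℝ) + 1 / 2 := by
    have h2 : (((k₀ : ℤ) * |κ * j| : ℤ) : ℝ) = 2 * (n : ℝ) + 1 := by
      rw [hn]; push_cast; ring
    rw [hh, hKabs]
    push_cast at h2 ⊢
    linarith
  -- basic size facts
  have hjne : j ≠ 0 := by rintro rfl; simp at hjodd
  have hκpos : 0 < κ := lt_of_lt_of_le (by exact_mod_cast Nat.succ_pos _) hκge
  have hKZ : (κ : ℤ) ≤ |κ * j| := by
    rw [abs_mul, abs_of_pos hκpos]
    nlinarith [Int.one_le_abs hjne, hκpos]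
  have hK1 : (1 : ℝ) ≤ K := by
    rw [hKabs]
    have : (1 : ℤ) ≤ |κ * j| := le_trans (le_trans (by exact_mod_cast Nat.le_add_left 1 _) hκge) hKZ
    exact_mod_cast this
  have hKbig : 4 * A / bdelta ≤ K := by
    rw [hKabs]
    have h1 : ((κ : ℤ) : ℝ) ≤ ((|κ * j| : ℤ) : ℝ) := by exact_mod_cast hKZ
    have h2 : ((⌈4 * A / bdelta⌉₊ + 1 : ℕ) : ℤ) ≤ κ := hκge
    have h2R : ((⌈4 * A / bdelta⌉₊ + 1 : ℕ) : ℝ) ≤ ((κ : ℤ) : ℝ) := by exact_mod_cast h2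
    linarith
  have hhpos : 0 < h := by rw [hh]; positivity
  have hhK : K / 2 ≤ h := by rw [hh]; nlinarith
  have hδh : 2 * A ≤ bdelta * h := by
    have : 4 * A ≤ bdelta * K := by
      rw [div_le_iff₀ hδ] at hKbig; linarith [hKbig]
    nlinarith
  have hα0 : 0 ≤ α := hα.1
  have hαA : α ≤ A := hα.2
  -- distance estimates
  have hd1 : bdelta ≤ |x - h| := by
    have := dist_half hδ hδ' ha0 ha1 (m - n)
    have he : ((m - n : ℤ) : ℝ) + (a - 1 / 2) = x - h := by
      rw [hhn, hx]; push_cast; ring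
    rwa [he] at this
  have hd2 : bdelta ≤ |x + h| := by
    have := dist_half hδ hδ' ha0 ha1 (m + n + 1)
    have he : ((m + n + 1 : ℤ) : ℝ) + (a - 1 / 2) = x + h := by
      rw [hhn, hx]; push_cast; ring
    rwa [he] at this
  have htri : 2 * h ≤ |x - h| + |x + h| := by
    have := abs_sub (x + h) (x - h)
    have he : |(x + h) - (x - h)| = 2 * h := by
      rw [show (x + h) - (x - h) = 2 * h by ring, abs_of_pos (by linarith)]
    linarith
  have hδleh : bdelta ≤ h := by linarith [hhK, hK1]
  have hprod : bdelta * h ≤ |x ^ 2 - h ^ 2| := by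
    have he : |x ^ 2 - h ^ 2| = |x - h| * |x + h| := by
      rw [← abs_mul]; ring_nf
    rw [he]
    nlinarith [mul_nonneg (sub_nonneg.mpr hd1) (sub_nonneg.mpr hd2)]
  -- rewrite the goal
  have hω : ((k₀ : ℝ) / 2) ^ 2 * ((κ * j : ℤ) : ℝ) ^ 2 = h ^ 2 := by
    rw [hh]
    have : K ^ 2 = ((κ * j : ℤ) : ℝ) ^ 2 := by rw [hK]; exact sq_abs _
    rw [← this]; ring
  rw [hω]
  set E : ℝ := x ^ 2 - h ^ 2 + α with hE
  clear_value E
  -- main estimate |E| ≥ δh/2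
  have hmain : bdelta * h / 2 ≤ |E| := by
    rcases le_or_gt (h ^ 2) (x ^ 2) with hc | hc
    · have h1 : bdelta * h ≤ x ^ 2 - h ^ 2 := by
        rwa [abs_of_nonneg (by linarith)] at hprod
      have : bdelta * h / 2 ≤ E := by rw [hE]; nlinarith
      exact this.trans (le_abs_self E)
    · have h1 : bdelta * h ≤ h ^ 2 - x ^ 2 := by
        rw [abs_sub_comm] at hprod
        rwa [abs_of_nonneg (by linarith)] at hprod
      have : bdelta * h / 2 ≤ -E := by rw [hE]; nlinarith
      calc bdelta * h / 2 ≤ -E := this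
      _ ≤ |E| := neg_le_abs E
  constructor
  · -- first bound
    have : C * K ≤ bdelta * h / 2 := by
      rw [hC, hh, div_mul_eq_mul_div, div_le_div_iff₀ (by positivity) (by norm_num)]
      have hK0 : (0:ℝ) ≤ K := by linarith
      have hk₀sq : (1:ℝ) ≤ (k₀:ℝ) * (k₀:ℝ) := by nlinarith
      nlinarith [mul_nonneg (mul_nonneg hδ.le hK0) (sub_nonneg.mpr hk₀sq)]
    exact le_trans this hmain
  · -- second bound
    rcases le_or_gt (x ^ 2) (2 * h ^ 2) with hc | hc
    · have h1 : C / K * x ^ 2 ≤ C / K * (2 * h ^ 2) := by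
        have : 0 ≤ C / K := by positivity
        nlinarith
      have h2 : C / K * (2 * h ^ 2) ≤ bdelta * h / 2 := by
        have hK0 : (0:ℝ) < K := by linarith
        rw [hC, hh, div_div, div_mul_eq_mul_div, div_le_div_iff₀ (by positivity) (by norm_num)]
        nlinarith [mul_nonneg hδ.le (sq_nonneg ((k₀:ℝ) * K))]
      exact le_trans (h1.trans h2) hmain
    · have hxpos : 0 < x ^ 2 := by nlinarith
      have hEge : x ^ 2 / 2 ≤ E := by rw [hE]; nlinarith
      have hCK : C / K ≤ 1 / 2 := by
        have h1 : C / K ≤ C := div_le_self hCpos.le hK1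
        have h2 : C ≤ bdelta := by
          rw [hC]
          exact div_le_self hδ.le (by linarith)
        linarith
      have this1 : C / K * x ^ 2 ≤ 1 / 2 * x ^ 2 :=
        mul_le_mul_of_nonneg_right hCK (sq_nonneg x)
      calc C / K * x ^ 2 ≤ 1 / 2 * x ^ 2 := this1
      _ = x ^ 2 / 2 := by ring
      _ ≤ E := hEge
      _ ≤ |E| := le_abs_self E
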